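/- For any matrix p in the region M(N(λ),P(λ)) and any k ∈ [m-1] with λ_k > 0, the partial sum Σ_{i=1}^{k} Σ_{j=1}^{λ_k} p_{ij} satisfies -1 ≤ Σ_{i=1}^{k} Σ_{j=1}^{λ_k} p_{ij} ≤ 0. -/
import Mathlib


/-- The open region `M(N,P)` of m x n real matrices with total sum 1, where the
entries indexed by `Ne` (and the row sums indexed by `rowN`, column sums indexed
by `colN`) are constrained to be negative, and all remaining entries, row sums
and column sums are constrained to be positive. -/
def MRegion (m n : ℕ) (Ne : Set (Fin m × Fin n)) (rowN : Set (Fin m)) (colN : Set (Fin n)) :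
    Set (Fin m → Fin n → ℝ) :=
  {p | (∑ i, ∑ j, p i j) = 1 ∧
    (∀ i j, ((i, j) ∈ Ne → p i j < 0) ∧ ((i, j) ∉ Ne → 0 < p i j)) ∧
    (∀ i, (i ∈ rowN → (∑ j, p i j) < 0) ∧ (i ∉ rowN → 0 < ∑ j, p i j)) ∧
    (∀ j, (j ∈ colN → (∑ i, p i j) < 0) ∧ (j ∉ colN → 0 < ∑ i, p i j))}


/-- For any `p ∈ M(N(λ),P(λ))` and any `k ∈ [m-1]` with `λ_k > 0`, the partial
sum `∑_{i=1}^{k} ∑_{j=1}^{λ_k} p_{ij}` lies in `[-1, 0]`. -/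
theorem mRegion_partition_partial_sum
    {m n : ℕ} (hm : 0 < m) (hn : 0 < n) (lam : Fin m → ℕ)
    (hmono : ∀ i i' : Fin m, i ≤ i' → lam i' ≤ lam i)
    (hbound : ∀ i, lam i ≤ n - 1)
    (hlast : lam ⟨m - 1, by omega⟩ = 0)
    (p : Fin m → Fin n → ℝ)
    (hp : p ∈ MRegion m n {q : Fin m × Fin n | (q.2 : ℕ) < lam q.1} ∅ ∅)
    (k : Fin m) (hk : (k : ℕ) < m - 1) (hlk : 0 < lam k) :
    -1 ≤ (∑ i ∈ Finset.univ.filter (fun i : Fin m => (i : ℕ) ≤ (k : ℕ)),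
            ∑ j ∈ Finset.univ.filter (fun j : Fin n => (j : ℕ) < lam k), p i j) ∧
      (∑ i ∈ Finset.univ.filter (fun i : Fin m => (i : ℕ) ≤ (k : ℕ)),
            ∑ j ∈ Finset.univ.filter (fun j : Fin n => (j : ℕ) < lam k), p i j) ≤ 0 := by
  obtain ⟨hsum, hent, hrow, hcol⟩ := hp
  set I : Finset (Fin m) := Finset.univ.filter (fun i : Fin m => (i : ℕ) ≤ (k : ℕ)) with hI
  set J : Finset (Fin n) := Finset.univ.filter (fun j : Fin n => (j : ℕ) < lam k) with hJ
  set S := ∑ i ∈ I, ∑ j ∈ J, p i j with hS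
  -- entries in the block are negative
  have hneg : ∀ i ∈ I, ∀ j ∈ J, p i j < 0 := by
    intro i hi j hj
    simp only [hI, Finset.mem_filter, Finset.mem_univ, true_and] at hi
    simp only [hJ, Finset.mem_filter, Finset.mem_univ, true_and] at hj
    exact (hent i j).1 (lt_of_lt_of_le hj (hmono i k hi))
  have hupper : S ≤ 0 := by
    apply Finset.sum_nonpos
    intro i hi
    apply Finset.sum_nonpos
    intro j hj
    exact (hneg i hi j hj).le
  refine ⟨?_, hupper⟩
  -- splitting sums
  have hsplitI : ∀ f : Fin m → ℝ, (∑ i, f i) = (∑ i ∈ I, f i) + ∑ i ∈ Finset.univ.filter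
      (fun i : Fin m => ¬ (i : ℕ) ≤ (k : ℕ)), f i := fun f =>
    (Finset.sum_filter_add_sum_filter_not Finset.univ _ f).symm
  have hsplitJ : ∀ g : Fin n → ℝ, (∑ j, g j) = (∑ j ∈ J, g j) + ∑ j ∈ Finset.univ.filter
      (fun j : Fin n => ¬ (j : ℕ) < lam k), g j := fun g =>
    (Finset.sum_filter_add_sum_filter_not Finset.univ _ g).symm
  set I' : Finset (Fin m) := Finset.univ.filter (fun i : Fin m => ¬ (i : ℕ) ≤ (k : ℕ)) with hI'
  set J' : Finset (Fin n) := Finset.univ.filter (fun j : Fin n => ¬ (j : ℕ) < lam k) with hJ'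
  set A := ∑ i ∈ I', ∑ j ∈ J, p i j with hA
  set B := ∑ i ∈ I, ∑ j ∈ J', p i j with hB
  set C := ∑ i ∈ I', ∑ j ∈ J', p i j with hC
  have hR : (∑ i ∈ I, ∑ j, p i j) = S + B := by
    rw [hS, hB, ← Finset.sum_add_distrib]
    exact Finset.sum_congr rfl fun i _ => hsplitJ (p i)
  have hCol : (∑ j ∈ J, ∑ i, p i j) = S + A := by
    rw [Finset.sum_congr rfl fun j _ => hsplitI (fun i => p i j), Finset.sum_add_distrib,
      hS, hA, Finset.sum_comm (s := J) (t := I), Finset.sum_comm (s := J) (t := I')]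
  have htot : S + A + B + C = 1 := by
    rw [← hsum, hsplitI (fun i => ∑ j, p i j)]
    have h1 : (∑ i ∈ I, ∑ j, p i j) = S + B := hR
    have h2 : (∑ i ∈ I', ∑ j, p i j) = A + C := by
      rw [hA, hC, ← Finset.sum_add_distrib]
      exact Finset.sum_congr rfl fun i _ => hsplitJ (p i)
    rw [h1, h2]; ring
  -- positivity facts
  have hRpos : 0 < ∑ i ∈ I, ∑ j, p i j := by
    apply Finset.sum_pos
    · intro i _
      exact (hrow i).2 (by simp)
    · exact ⟨k, by simp [hI]⟩
  have hColpos : 0 < ∑ j ∈ J, ∑ i, p i j := by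
    apply Finset.sum_pos
    · intro j _
      exact (hcol j).2 (by simp)
    · exact ⟨⟨0, hn⟩, by simp [hJ, hlk]⟩
  have hCnn : 0 ≤ C := by
    apply Finset.sum_nonneg
    intro i hi
    apply Finset.sum_nonneg
    intro j hj
    simp only [hI', Finset.mem_filter, Finset.mem_univ, true_and, not_le] at hi
    simp only [hJ', Finset.mem_filter, Finset.mem_univ, true_and, not_lt] at hj
    have : lam i ≤ lam k := hmono k i hi.le
    exact ((hent i j).2 (by simp only [Set.mem_setOf_eq]; omega)).le
  -- combine: 1 + S = (S+B) + (S+A) + C > 0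
  have := hR ▸ hRpos
  have := hCol ▸ hColpos
  linarith
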